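/- arXiv:2108.05511 — 3 statements merged into one kernel-verified Lean document; each statement's English description precedes it below -/
import Mathlib

section
/- The function f(y) = (2b)^a / (σ B(a,1/2)) · y^{-(1/(2σ)+1)} / (y^{-1/σ} + 2b)^{a+1/2} is a probability density on (0,∞), i.e., its integral over (0,∞) equals 1, for all σ, a, b > 0. -/
open Real MeasureTheory

/-- Beta function as an integral. -/
noncomputable def betaFn (m n : ℝ) : ℝ := ∫ t in (0:ℝ)..1, t ^ (m - 1) * (1 - t) ^ (n - 1)

/-- Density of the GLMGA(σ, a, b) distribution. -/
noncomputable def glmgaPdf (σ a b y : ℝ) : ℝ :=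
  (2 * b) ^ a / (σ * betaFn a (1/2)) *
    (y ^ (-(1 / (2 * σ) + 1)) / (y ^ (-(1 / σ)) + 2 * b) ^ (a + 1/2))

lemma beta_integrable {a : ℝ} (ha : 0 < a) :
    IntervalIntegrable (fun t : ℝ => t ^ (a - 1) * (1 - t) ^ ((1:ℝ)/2 - 1)) volume 0 1 := by
  have h1 : IntervalIntegrable (fun t : ℝ => t ^ (a - 1) * (1 - t) ^ ((1:ℝ)/2 - 1)) volume 0 (1/2) := by
    apply (intervalIntegral.intervalIntegrable_rpow' (by linarith : (-1:ℝ) < a - 1)).mul_continuousOn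
    apply (continuousOn_const.sub continuousOn_id).rpow_const
    intro x hx
    rw [Set.uIcc_of_le (by norm_num : (0:ℝ) ≤ 1/2)] at hx
    left
    intro h
    simp only [Pi.sub_apply, id] at h
    nlinarith [hx.1, hx.2]
  have h2 : IntervalIntegrable (fun t : ℝ => t ^ (a - 1) * (1 - t) ^ ((1:ℝ)/2 - 1)) volume (1/2) 1 := by
    have base : IntervalIntegrable (fun t : ℝ => t ^ ((1:ℝ)/2 - 1)) volume 0 (1/2) :=
      intervalIntegral.intervalIntegrable_rpow' (by norm_num)
    have : IntervalIntegrable (fun t : ℝ => (1 - t) ^ ((1:ℝ)/2 - 1)) volume (1/2) 1 := by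
      have h := (base.comp_sub_left 1).symm
      norm_num at h ⊢
      exact h
    apply this.continuousOn_mul
    apply continuousOn_id.rpow_const
    intro x hx
    rw [Set.uIcc_of_le (by norm_num : (1:ℝ)/2 ≤ 1)] at hx
    left
    intro h
    simp only [id] at h
    nlinarith [hx.1]
  exact h1.trans h2

lemma betaFn_pos {a : ℝ} (ha : 0 < a) : 0 < betaFn a (1/2) := by
  rw [betaFn]
  apply intervalIntegral.intervalIntegral_pos_of_pos_on (beta_integrable ha)
  · intro x hx
    exact mul_pos (rpow_pos_of_pos hx.1 _) (rpow_pos_of_pos (by linarith [hx.2]) _)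
  · norm_num

lemma glmga_key (σ a b : ℝ) (hσ : 0 < σ) (hb : 0 < b) (hB : betaFn a (1/2) ≠ 0)
    {t : ℝ} (ht0 : 0 < t) (ht1 : t < 1) :
    |2 * b * σ * (2 * b * (1 - t) / t) ^ (-σ - 1) / t ^ 2| *
      glmgaPdf σ a b ((2 * b * (1 - t) / t) ^ (-σ))
      = t ^ (a - 1) * (1 - t) ^ ((1:ℝ)/2 - 1) / betaFn a (1/2) := by
  have h1t : 0 < 1 - t := by linarith
  have h2b : 0 < 2 * b := by linarith
  have hh : 0 < 2 * b * (1 - t) / t := by positivity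
  have hbt : 0 < 2 * b / t := by positivity
  have e1 : ((2 * b * (1 - t) / t) ^ (-σ)) ^ (-(1 / σ)) = 2 * b * (1 - t) / t := by
    rw [← Real.rpow_mul hh.le, show (-σ) * (-(1/σ)) = 1 by field_simp, Real.rpow_one]
  have e3 : ((2 * b * (1 - t) / t) ^ (-σ)) ^ (-(1 / (2*σ) + 1)) = (2 * b * (1 - t) / t) ^ (1/2 + σ) := by
    rw [← Real.rpow_mul hh.le]; congr 1; field_simp
  rw [glmgaPdf, e1, e3, abs_of_pos (by positivity),
    show 2 * b * (1 - t) / t + 2 * b = 2 * b / t by field_simp; ring]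
  rw [show (t:ℝ)^2 = t ^ (2:ℝ) by rw [show (2:ℝ) = ((2:ℕ):ℝ) by norm_num, Real.rpow_natCast]]
  rw [show (2:ℝ) * b * σ = (2*b) ^ (1:ℝ) * σ by rw [Real.rpow_one]]
  simp only [Real.rpow_def_of_pos hh, Real.rpow_def_of_pos h2b, Real.rpow_def_of_pos hbt,
    Real.rpow_def_of_pos ht0, Real.rpow_def_of_pos h1t]
  rw [show Real.log (2*b*(1-t)/t) = Real.log (2*b) + Real.log (1-t) - Real.log t by
      rw [Real.log_div (by positivity) ht0.ne', Real.log_mul h2b.ne' h1t.ne'],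
    show Real.log (2*b/t) = Real.log (2*b) - Real.log t from Real.log_div h2b.ne' ht0.ne']
  field_simp
  have main : ∀ x y z : ℝ, rexp x * rexp ((x+z-y)*(-σ-1)) * (rexp (x*a) * rexp ((x+z-y)*(1+σ*2)/2)) =
      rexp (y*(a-1)) * rexp (z*(1-2)/2) * (rexp (y*2) * rexp ((x-y)*(a*2+1)/2)) := by
    intro x y z
    rw [← Real.exp_add, ← Real.exp_add, ← Real.exp_add, ← Real.exp_add, ← Real.exp_add,
      ← Real.exp_add]
    exact congrArg rexp (by ring)
  linear_combination (norm := ring_nf) main (Real.log (2*b)) (Real.log t) (Real.log (1-t))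

/-- The GLMGA(σ,a,b) density integrates to 1 over (0,∞). -/
theorem glmga_pdf_integrates_to_one (σ a b : ℝ) (hσ : 0 < σ) (ha : 0 < a) (hb : 0 < b) :
    ∫ y in Set.Ioi (0:ℝ), glmgaPdf σ a b y = 1 := by
  have hBpos := betaFn_pos ha
  have h2b : 0 < 2 * b := by linarith
  -- the substitution map
  set g : ℝ → ℝ := fun t => (2 * b * (1 - t) / t) ^ (-σ) with hg
  have hder : ∀ t ∈ Set.Ioo (0:ℝ) 1,
      HasDerivWithinAt g (2 * b * σ * (2 * b * (1 - t) / t) ^ (-σ - 1) / t ^ 2)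
        (Set.Ioo 0 1) t := by
    rintro t ⟨ht0, ht1⟩
    have h1t : 0 < 1 - t := by linarith
    have hh : 0 < 2 * b * (1 - t) / t := by positivity
    have hnum : HasDerivAt (fun x : ℝ => 2 * b * (1 - x)) (2 * b * (-1)) t := by
      simpa using ((hasDerivAt_id t).const_sub 1).const_mul (2 * b)
    have hdiv : HasDerivAt (fun x : ℝ => 2 * b * (1 - x) / x)
        ((2 * b * (-1) * t - 2 * b * (1 - t) * 1) / t ^ 2) t := by
      exact hnum.div (hasDerivAt_id' t) ht0.ne'
    have hcomp := hdiv.rpow_const (p := -σ) (Or.inl hh.ne')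
    refine (hcomp.congr_deriv ?_).hasDerivWithinAt
    field_simp
    ring
  have hinj : Set.InjOn g (Set.Ioo 0 1) := by
    rintro s ⟨hs0, hs1⟩ t ⟨ht0, ht1⟩ hst
    have h1s : 0 < 1 - s := by linarith
    have h1t : 0 < 1 - t := by linarith
    have hhs : (0:ℝ) ≤ 2 * b * (1 - s) / s := by positivity
    have hht : (0:ℝ) ≤ 2 * b * (1 - t) / t := by positivity
    have h2 := Real.rpow_left_injOn (x := -σ) (neg_ne_zero.mpr hσ.ne') hhs hht hst
    have h3 : 2 * b * ((1 - s) * t) = 2 * b * ((1 - t) * s) := by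
      field_simp at h2
      nlinarith [h2]
    have h4 : (1 - s) * t = (1 - t) * s := by
      have := mul_left_cancel₀ h2b.ne' h3
      exact this
    nlinarith [h4]
  have himg : g '' Set.Ioo 0 1 = Set.Ioi (0:ℝ) := by
    ext y
    constructor
    · rintro ⟨t, ⟨ht0, ht1⟩, rfl⟩
      have h1t : 0 < 1 - t := by linarith
      exact Set.mem_Ioi.mpr (rpow_pos_of_pos (by positivity) _)
    · intro hy
      rw [Set.mem_Ioi] at hy
      have hyp : 0 < y ^ (-(1/σ)) := rpow_pos_of_pos hy _
      refine ⟨2 * b / (y ^ (-(1/σ)) + 2 * b), ⟨by positivity, ?_⟩, ?_⟩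
      · rw [div_lt_one (by positivity)]; linarith
      · have key2 : 2 * b * (1 - 2 * b / (y ^ (-(1/σ)) + 2 * b)) / (2 * b / (y ^ (-(1/σ)) + 2 * b))
            = y ^ (-(1/σ)) := by
          have hd : (0:ℝ) < y ^ (-(1/σ)) + 2 * b := by positivity
          field_simp
          try ring
        show (2 * b * (1 - 2 * b / (y ^ (-(1/σ)) + 2 * b)) / (2 * b / (y ^ (-(1/σ)) + 2 * b))) ^ (-σ) = y
        rw [key2, ← Real.rpow_mul hy.le, show -(1/σ) * (-σ) = 1 by field_simp, Real.rpow_one]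
  rw [← himg, integral_image_eq_integral_abs_deriv_smul measurableSet_Ioo hder hinj]
  have hcong : ∀ t ∈ Set.Ioo (0:ℝ) 1,
      |2 * b * σ * (2 * b * (1 - t) / t) ^ (-σ - 1) / t ^ 2| • glmgaPdf σ a b (g t)
        = t ^ (a - 1) * (1 - t) ^ ((1:ℝ)/2 - 1) / betaFn a (1/2) := by
    rintro t ⟨ht0, ht1⟩
    rw [smul_eq_mul]
    exact glmga_key σ a b hσ hb hBpos.ne' ht0 ht1
  rw [setIntegral_congr_fun measurableSet_Ioo hcong, integral_div]
  have hbeta : ∫ t in Set.Ioo (0:ℝ) 1, t ^ (a - 1) * (1 - t) ^ ((1:ℝ)/2 - 1) = betaFn a (1/2) := by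
    rw [betaFn, intervalIntegral.integral_of_le zero_le_one,
      MeasureTheory.integral_Ioc_eq_integral_Ioo]
  rw [hbeta, div_self hBpos.ne']
end

section
/- For the GLMGA(σ,a,b) distribution, the cumulative distribution function satisfies F(y) = 1 - I_{1/2,a}( y^{-1/σ} / (y^{-1/σ} + 2b) ) for all y > 0, where I_{m,n} denotes the regularized incomplete Beta function. -/
open Real MeasureTheory

/-- Regularized incomplete Beta function. -/
noncomputable def regIncBeta (m n x : ℝ) : ℝ :=
  (∫ t in (0:ℝ)..x, t ^ (m - 1) * (1 - t) ^ (n - 1)) / betaFn m n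

open Filter Set intervalIntegral

lemma betaInt_half {m n : ℝ} (hm : 0 < m) (hn : 0 < n) :
    IntervalIntegrable (fun t : ℝ => t ^ (m - 1) * (1 - t) ^ (n - 1)) volume 0 (1/2) := by
  set C : ℝ := max 1 ((1/2 : ℝ) ^ (n - 1)) with hC
  have hCpos : (0:ℝ) < C := lt_max_of_lt_left one_pos
  have hmaj : IntervalIntegrable (fun t : ℝ => C * t ^ (m - 1)) volume 0 (1/2) :=
    (intervalIntegrable_rpow' (by linarith)).const_mul C
  refine hmaj.mono_fun ((by fun_prop : Measurable fun t : ℝ => t ^ (m - 1) * (1 - t) ^ (n - 1)).aestronglyMeasurable) ?_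
  rw [Filter.EventuallyLE, ae_restrict_iff' measurableSet_uIoc]
  refine Filter.Eventually.of_forall ?_
  intro t ht
  rw [Set.uIoc_of_le (by norm_num : (0:ℝ) ≤ 1/2)] at ht
  obtain ⟨ht0, ht1⟩ := ht
  have h1t : (0:ℝ) < 1 - t := by linarith
  have habs1 : ‖t ^ (m - 1) * (1 - t) ^ (n - 1)‖ = t ^ (m - 1) * (1 - t) ^ (n - 1) := by
    rw [Real.norm_eq_abs, abs_of_nonneg]; positivity
  have habs2 : ‖C * t ^ (m - 1)‖ = C * t ^ (m - 1) := by
    rw [Real.norm_eq_abs, abs_of_nonneg]; positivity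
  simp only [habs1, habs2]
  rw [mul_comm C _]
  apply mul_le_mul_of_nonneg_left _ (Real.rpow_nonneg ht0.le _)
  rcases le_or_gt 1 n with h | h
  · calc (1-t) ^ (n-1) ≤ 1 ^ (n-1) :=
          Real.rpow_le_rpow h1t.le (by linarith) (by linarith)
      _ ≤ C := by rw [Real.one_rpow]; exact le_max_left _ _
  · calc (1-t) ^ (n-1) ≤ (1/2 : ℝ) ^ (n-1) := by
          rw [Real.rpow_le_rpow_iff_of_neg h1t (by norm_num) (by linarith)]; linarith
      _ ≤ C := le_max_right _ _

lemma betaInt {m n : ℝ} (hm : 0 < m) (hn : 0 < n) :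
    IntervalIntegrable (fun t : ℝ => t ^ (m - 1) * (1 - t) ^ (n - 1)) volume 0 1 := by
  apply (betaInt_half hm hn).trans (b := 1/2)
  have h := (betaInt_half hn hm).comp_sub_left 1
  have he : (fun x : ℝ => (1-x) ^ (n-1) * (1 - (1-x)) ^ (m-1))
      = (fun x : ℝ => x ^ (m-1) * (1-x) ^ (n-1)) := by
    funext x; rw [sub_sub_cancel]; ring
  rw [he] at h
  norm_num at h
  exact h.symm

lemma betaFn_symm (a : ℝ) : betaFn a (1/2) = betaFn (1/2) a := by
  have h := intervalIntegral.integral_comp_sub_left (a := 0) (b := 1)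
    (fun t : ℝ => t ^ (a-1) * (1-t) ^ (1/2-1:ℝ)) 1
  simp only [sub_sub_cancel, sub_zero, sub_self] at h
  have e1 : (fun x : ℝ => (1-x) ^ (a-1) * x ^ (1/2-1:ℝ))
      = fun x : ℝ => x ^ (1/2-1:ℝ) * (1-x) ^ (a-1) := by
    funext x; ring
  unfold betaFn
  rw [← h]
  exact intervalIntegral.integral_congr (fun x _ => mul_comm _ _)

lemma betaFn_pos_s2 {m n : ℝ} (hm : 0 < m) (hn : 0 < n) : 0 < betaFn m n := by
  apply intervalIntegral.intervalIntegral_pos_of_pos_on (betaInt hm hn) _ one_pos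
  intro x hx
  have h1 : 0 < x := hx.1
  have h2 : 0 < 1 - x := by linarith [hx.2]
  positivity

lemma glmga_hasDerivAt (σ a b : ℝ) (hσ : 0 < σ) (ha : 0 < a) (hb : 0 < b)
    {t : ℝ} (ht : 0 < t) :
    HasDerivAt (fun s : ℝ => -regIncBeta (1/2) a (s ^ (-(1/σ)) / (s ^ (-(1/σ)) + 2*b)))
      (glmgaPdf σ a b t) t := by
  have h2b : (0:ℝ) < 2 * b := by linarith
  set w : ℝ := t ^ (-(1/σ)) with hw
  have hwpos : 0 < w := Real.rpow_pos_of_pos ht _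
  set D : ℝ := w + 2*b with hD
  have hDpos : 0 < D := by positivity
  have hwD : w < D := by simp [hD]; linarith
  set ut : ℝ := w / D with hut
  have hut0 : 0 < ut := div_pos hwpos hDpos
  have hut1 : ut < 1 := (div_lt_one hDpos).mpr hwD
  -- derivative of w
  have hw' : HasDerivAt (fun s : ℝ => s ^ (-(1/σ))) (-(1/σ) * t ^ (-(1/σ) - 1)) t :=
    Real.hasDerivAt_rpow_const (Or.inl ht.ne')
  -- derivative of u
  have hu : HasDerivAt (fun s : ℝ => s ^ (-(1/σ)) / (s ^ (-(1/σ)) + 2*b))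
      ((-(1/σ) * t ^ (-(1/σ) - 1) * D - w * (-(1/σ) * t ^ (-(1/σ) - 1))) / D ^ 2) t :=
    hw'.div (hw'.add_const (2*b)) hDpos.ne'
  -- derivative of primitive at ut
  have hint : IntervalIntegrable (fun s : ℝ => s ^ (1/2 - 1 : ℝ) * (1 - s) ^ (a - 1)) volume 0 ut := by
    apply (betaInt (by norm_num) ha).mono_set
    rw [Set.uIcc_of_le hut0.le, Set.uIcc_of_le (by norm_num : (0:ℝ) ≤ 1)]
    exact Set.Icc_subset_Icc le_rfl hut1.le
  have hmeas : StronglyMeasurableAtFilter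
      (fun s : ℝ => s ^ (1/2 - 1 : ℝ) * (1 - s) ^ (a - 1)) (nhds ut) :=
    ((by fun_prop : Measurable (fun s : ℝ => s ^ (1/2 - 1 : ℝ) * (1 - s) ^ (a - 1))).stronglyMeasurable).stronglyMeasurableAtFilter
  have hcont : ContinuousAt (fun s : ℝ => s ^ (1/2 - 1 : ℝ) * (1 - s) ^ (a - 1)) ut := by
    apply ContinuousAt.mul
    · exact Real.continuousAt_rpow_const _ _ (Or.inl hut0.ne')
    · exact (Real.continuousAt_rpow_const _ _ (Or.inl (by linarith : (1:ℝ) - ut ≠ 0)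
        |> fun h => h)).comp ((continuous_const.sub continuous_id).continuousAt)
  have hP : HasDerivAt (fun x : ℝ => ∫ s in (0:ℝ)..x, s ^ (1/2 - 1 : ℝ) * (1 - s) ^ (a - 1))
      (ut ^ (1/2 - 1 : ℝ) * (1 - ut) ^ (a - 1)) ut :=
    intervalIntegral.integral_hasDerivAt_right hint hmeas hcont
  have hcomp := ((hP.comp t hu).div_const (betaFn (1/2) a)).neg
  have hgoal : HasDerivAt (fun s : ℝ => -regIncBeta (1/2) a (s ^ (-(1/σ)) / (s ^ (-(1/σ)) + 2*b)))
      (-(ut ^ (1/2 - 1 : ℝ) * (1 - ut) ^ (a - 1) *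
        ((-(1/σ) * t ^ (-(1/σ) - 1) * D - w * (-(1/σ) * t ^ (-(1/σ) - 1))) / D ^ 2) /
        betaFn (1/2) a)) t := by
    exact hcomp
  convert hgoal using 1
  have e2 : (1:ℝ) - ut = 2*b/D := by
    rw [hut]; field_simp; rw [hD]; ring
  have ed1 : ut ^ (1/2-1:ℝ) = w ^ (1/2-1:ℝ) / D ^ (1/2-1:ℝ) := by
    rw [hut]; exact Real.div_rpow hwpos.le hDpos.le _
  have ed2 : ((2*b)/D) ^ (a-1:ℝ) = (2*b) ^ (a-1:ℝ) / D ^ (a-1:ℝ) :=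
    Real.div_rpow h2b.le hDpos.le _
  have ew : w ^ (1/2-1:ℝ) = t ^ (-(1/σ) * (1/2-1)) := (Real.rpow_mul ht.le _ _).symm
  have hnum : -(1/σ) * t ^ (-(1/σ) - 1) * D - w * (-(1/σ) * t ^ (-(1/σ) - 1))
      = -(1/σ) * t ^ (-(1/σ)-1) * (2*b) := by rw [hD]; ring
  have hT : t ^ (-(1/σ) * (1/2-1)) * t ^ (-(1/σ)-1) = t ^ (-(1 / (2*σ) + 1)) := by
    rw [← Real.rpow_add ht]; congr 1; field_simp; ring
  have hDrel : D ^ (1/2-1:ℝ) * D ^ (a-1:ℝ) * D ^ (2:ℕ) = D ^ (a+1/2:ℝ) := by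
    rw [← Real.rpow_natCast D 2, ← Real.rpow_add hDpos, ← Real.rpow_add hDpos]
    congr 1; push_cast; ring
  have hBm : (2*b) ^ (a-1:ℝ) * (2*b) = (2*b) ^ (a:ℝ) := by
    rw [← Real.rpow_add_one h2b.ne']; congr 1; ring
  rw [e2, ed1, ed2, ew, hnum]
  unfold glmgaPdf
  rw [betaFn_symm]
  have hBpos : 0 < betaFn (1/2) a := betaFn_pos_s2 (by norm_num) ha
  have h1 : D ^ (1/2-1:ℝ) ≠ 0 := (Real.rpow_pos_of_pos hDpos _).ne'
  have h2 : D ^ (a-1:ℝ) ≠ 0 := (Real.rpow_pos_of_pos hDpos _).ne'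
  have h3 : D ^ (a+1/2:ℝ) ≠ 0 := (Real.rpow_pos_of_pos hDpos _).ne'
  rw [← hT, ← hDrel, ← hBm]
  field_simp

lemma glmgaPdf_continuousAt (σ a b : ℝ) (hσ : 0 < σ) (hb : 0 < b) {t : ℝ} (ht : 0 < t) :
    ContinuousAt (glmgaPdf σ a b) t := by
  have hw : 0 < t ^ (-(1/σ)) := Real.rpow_pos_of_pos ht _
  have hD : 0 < t ^ (-(1/σ)) + 2*b := by linarith
  unfold glmgaPdf
  apply ContinuousAt.mul continuousAt_const
  apply ContinuousAt.div
  · exact Real.continuousAt_rpow_const _ _ (Or.inl ht.ne')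
  · exact ((Real.continuousAt_rpow_const _ _ (Or.inl ht.ne')).add continuousAt_const).rpow_const
      (Or.inl hD.ne')
  · exact (Real.rpow_pos_of_pos hD _).ne'

lemma glmgaPdf_nonneg (σ a b : ℝ) (hσ : 0 < σ) (ha : 0 < a) (hb : 0 < b) {t : ℝ} (ht : 0 < t) :
    0 ≤ glmgaPdf σ a b t := by
  unfold glmgaPdf
  have h1 : 0 < betaFn a (1/2) := betaFn_pos_s2 ha (by norm_num)
  have h2 : (0:ℝ) < 2*b := by linarith
  positivity

lemma glmgaPdf_intInt (σ a b : ℝ) (hσ : 0 < σ) (ha : 0 < a) (hb : 0 < b)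
    {y : ℝ} (hy : 0 < y) : IntervalIntegrable (glmgaPdf σ a b) volume 0 y := by
  have hBpos : 0 < betaFn a (1/2) := betaFn_pos_s2 ha (by norm_num)
  have h2b : (0:ℝ) < 2*b := by linarith
  set K : ℝ := (2*b) ^ a / (σ * betaFn a (1/2)) with hK
  have hKpos : 0 < K := div_pos (Real.rpow_pos_of_pos h2b _) (by positivity)
  have hmaj : IntervalIntegrable (fun t : ℝ => K * t ^ (a/σ - 1)) volume 0 y :=
    (intervalIntegrable_rpow' (by
      have h0 : 0 < a/σ := by positivity
      linarith)).const_mul K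
  refine hmaj.mono_fun ((by unfold glmgaPdf; fun_prop : Measurable (glmgaPdf σ a b)).aestronglyMeasurable) ?_
  rw [Filter.EventuallyLE, ae_restrict_iff' measurableSet_uIoc]
  refine Filter.Eventually.of_forall ?_
  intro t ht
  rw [Set.uIoc_of_le hy.le] at ht
  obtain ⟨ht0, _⟩ := ht
  have hw : 0 < t ^ (-(1/σ)) := Real.rpow_pos_of_pos ht0 _
  have hD : 0 < t ^ (-(1/σ)) + 2*b := by linarith
  have hq : (0:ℝ) < a + 1/2 := by linarith
  rw [Real.norm_eq_abs, Real.norm_eq_abs, abs_of_nonneg (glmgaPdf_nonneg σ a b hσ ha hb ht0),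
    abs_of_nonneg (by positivity : (0:ℝ) ≤ K * t ^ (a/σ - 1))]
  unfold glmgaPdf
  rw [← hK]
  apply mul_le_mul_of_nonneg_left _ hKpos.le
  have h1 : (t ^ (-(1/σ))) ^ (a+1/2:ℝ) ≤ (t ^ (-(1/σ)) + 2*b) ^ (a+1/2:ℝ) :=
    Real.rpow_le_rpow hw.le (by linarith) hq.le
  have h2 : 0 < (t ^ (-(1/σ))) ^ (a+1/2:ℝ) := Real.rpow_pos_of_pos hw _
  calc t ^ (-(1 / (2 * σ) + 1)) / (t ^ (-(1 / σ)) + 2 * b) ^ (a + 1/2:ℝ)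
      ≤ t ^ (-(1 / (2 * σ) + 1)) / (t ^ (-(1/σ))) ^ (a+1/2:ℝ) := by
        gcongr
    _ = t ^ (a/σ - 1) := by
        rw [← Real.rpow_mul ht0.le, div_eq_mul_inv, ← Real.rpow_neg ht0.le,
          ← Real.rpow_add ht0]
        congr 1
        field_simp
        ring
/-- The GLMGA cdf (integral of the density from 0) has the stated closed form. -/
theorem glmga_cdf_closed_form (σ a b : ℝ) (hσ : 0 < σ) (ha : 0 < a) (hb : 0 < b)
    (y : ℝ) (hy : 0 < y) :
    ∫ t in (0:ℝ)..y, glmgaPdf σ a b t =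
      1 - regIncBeta (1/2) a (y ^ (-(1 / σ)) / (y ^ (-(1 / σ)) + 2 * b)) := by
  have hBhalf : 0 < betaFn (1/2) a := betaFn_pos_s2 (by norm_num) ha
  have hIntY : IntervalIntegrable (glmgaPdf σ a b) volume 0 y := glmgaPdf_intInt σ a b hσ ha hb hy
  set l : Filter ℝ := nhdsWithin 0 (Set.Ioo 0 y) with hl
  have hlne : l.NeBot := by
    rw [hl]
    apply mem_closure_iff_nhdsWithin_neBot.mp
    rw [closure_Ioo hy.ne]
    exact Set.left_mem_Icc.mpr hy.le
  have hmem : ∀ᶠ ε in l, ε ∈ Set.Ioo 0 y := eventually_mem_nhdsWithin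
  -- Limit 1 : the truncated integrals tend to the full integral
  have hT1 : Filter.Tendsto (fun ε => ∫ t in ε..y, glmgaPdf σ a b t) l
      (nhds (∫ t in (0:ℝ)..y, glmgaPdf σ a b t)) := by
    have hcont0 : ContinuousWithinAt (fun ε => ∫ t in (0:ℝ)..ε, glmgaPdf σ a b t)
        (Set.Icc 0 y) 0 :=
      intervalIntegral.continuousWithinAt_primitive (measure_singleton 0)
        (by simpa [min_self, max_eq_right hy.le] using hIntY)
    have h0 : Filter.Tendsto (fun ε => ∫ t in (0:ℝ)..ε, glmgaPdf σ a b t) l (nhds 0) := by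
      have h := hcont0.tendsto
      rw [intervalIntegral.integral_same] at h
      exact h.mono_left (nhdsWithin_mono _ Set.Ioo_subset_Icc_self)
    have heq : ∀ᶠ ε in l, (∫ t in (0:ℝ)..y, glmgaPdf σ a b t)
        - (∫ t in (0:ℝ)..ε, glmgaPdf σ a b t) = ∫ t in ε..y, glmgaPdf σ a b t := by
      filter_upwards [hmem] with ε hε
      exact intervalIntegral.integral_interval_sub_left hIntY
        (hIntY.mono_set (by
          rw [Set.uIcc_of_le hy.le, Set.uIcc_of_le hε.1.le]
          exact Set.Icc_subset_Icc le_rfl hε.2.le))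
    have h2 := (Filter.Tendsto.sub tendsto_const_nhds h0).congr' heq
    rw [sub_zero] at h2
    exact h2
  -- Limit 2 : via FTC and continuity of the Beta primitive
  have hftc : ∀ᶠ ε in l, (∫ t in ε..y, glmgaPdf σ a b t)
      = (-regIncBeta (1/2) a (y ^ (-(1/σ)) / (y ^ (-(1/σ)) + 2*b)))
        - (-regIncBeta (1/2) a (ε ^ (-(1/σ)) / (ε ^ (-(1/σ)) + 2*b))) := by
    filter_upwards [hmem] with ε hε
    apply intervalIntegral.integral_eq_sub_of_hasDerivAt
    · intro x hx
      rw [Set.uIcc_of_le hε.2.le] at hx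
      exact glmga_hasDerivAt σ a b hσ ha hb (lt_of_lt_of_le hε.1 hx.1)
    · apply ContinuousOn.intervalIntegrable
      intro x hx
      rw [Set.uIcc_of_le hε.2.le] at hx
      exact (glmgaPdf_continuousAt σ a b hσ hb (lt_of_lt_of_le hε.1 hx.1)).continuousWithinAt
  have hutends : Filter.Tendsto (fun ε : ℝ => ε ^ (-(1/σ)) / (ε ^ (-(1/σ)) + 2*b)) l (nhds 1) := by
    have hs : Filter.Tendsto (fun ε : ℝ => ε ^ (1/σ)) l (nhds 0) := by
      have hc : ContinuousAt (fun ε : ℝ => ε ^ (1/σ:ℝ)) 0 :=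
        Real.continuousAt_rpow_const 0 _ (Or.inr (by positivity))
      have h := hc.tendsto
      rw [Real.zero_rpow (by positivity : (0:ℝ) < 1/σ).ne'] at h
      exact h.mono_left nhdsWithin_le_nhds
    have hv : Filter.Tendsto (fun ε : ℝ => 1/(1+2*b*ε ^ (1/σ:ℝ))) l (nhds 1) := by
      have hc2 : ContinuousAt (fun s : ℝ => 1/(1+2*b*s)) 0 :=
        ContinuousAt.div continuousAt_const (by fun_prop) (by norm_num)
      have h := hc2.tendsto.comp hs
      have hval : (1:ℝ)/(1+2*b*(0:ℝ)) = 1 := by norm_num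
      rw [hval] at h
      exact h
    apply hv.congr'
    filter_upwards [hmem] with ε hε
    have hε0 : 0 < ε := hε.1
    have hw : 0 < ε ^ (-(1/σ):ℝ) := Real.rpow_pos_of_pos hε0 _
    have hspos : 0 < ε ^ (1/σ:ℝ) := Real.rpow_pos_of_pos hε0 _
    have hws : ε ^ (-(1/σ):ℝ) * ε ^ (1/σ:ℝ) = 1 := by
      rw [← Real.rpow_add hε0]
      norm_num
    rw [div_eq_div_iff (by positivity) (by positivity)]
    nlinarith [hws]
  have hRIB : Filter.Tendsto
      (fun ε : ℝ => regIncBeta (1/2) a (ε ^ (-(1/σ)) / (ε ^ (-(1/σ)) + 2*b))) l (nhds 1) := by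
    have hRIBcont : ContinuousWithinAt
        (fun x : ℝ => ∫ s in (0:ℝ)..x, s ^ (1/2-1:ℝ) * (1-s) ^ (a-1)) (Set.Icc 0 1) 1 :=
      intervalIntegral.continuousWithinAt_primitive (measure_singleton 1)
        (by simpa [min_self, max_eq_right (by norm_num : (0:ℝ) ≤ 1)] using
          betaInt (by norm_num) ha)
    have hin : Filter.Tendsto (fun ε : ℝ => ε ^ (-(1/σ)) / (ε ^ (-(1/σ)) + 2*b)) l
        (nhdsWithin 1 (Set.Icc 0 1)) := by
      rw [tendsto_nhdsWithin_iff]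
      refine ⟨hutends, ?_⟩
      filter_upwards [hmem] with ε hε
      have hw : 0 < ε ^ (-(1/σ):ℝ) := Real.rpow_pos_of_pos hε.1 _
      have hD : 0 < ε ^ (-(1/σ):ℝ) + 2*b := by linarith
      constructor
      · positivity
      · rw [div_le_one hD]; linarith
    have hcomp := hRIBcont.tendsto.comp hin
    have hval : (∫ s in (0:ℝ)..1, s ^ (1/2-1:ℝ) * (1-s) ^ (a-1)) = betaFn (1/2) a := rfl
    have h2 := hcomp.div_const (betaFn (1/2) a)
    rw [show (∫ s in (0:ℝ)..1, s ^ (1/2-1:ℝ) * (1-s) ^ (a-1)) / betaFn (1/2) a = 1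
      from div_self hBhalf.ne'] at h2
    exact h2
  have hT2 : Filter.Tendsto (fun ε => ∫ t in ε..y, glmgaPdf σ a b t) l
      (nhds ((-regIncBeta (1/2) a (y ^ (-(1/σ)) / (y ^ (-(1/σ)) + 2*b))) + 1)) := by
    have hftc' : (fun ε => ∫ t in ε..y, glmgaPdf σ a b t) =ᶠ[l]
        (fun ε => (-regIncBeta (1/2) a (y ^ (-(1/σ)) / (y ^ (-(1/σ)) + 2*b)))
          - (-regIncBeta (1/2) a (ε ^ (-(1/σ)) / (ε ^ (-(1/σ)) + 2*b)))) := hftc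
    have h := (Filter.Tendsto.sub (tendsto_const_nhds
      (x := -regIncBeta (1/2) a (y ^ (-(1/σ)) / (y ^ (-(1/σ)) + 2*b)))) hRIB.neg).congr' hftc'.symm
    simpa [sub_neg_eq_add] using h
  have := tendsto_nhds_unique hT1 hT2
  rw [this]
  ring_nf
end

section
/- The GLMGA(σ,a,b) density equals the GB2(τ,μ,ν,p) density with τ=a, μ=(2b)^{-σ}, ν=1/2, p = -1/σ, where the GB2 density is f_{GB2}(y) = |p|/(B(ν,τ) y) · μ^{pτ} y^{pν} / (y^p + μ^p)^{ν+τ}. -/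
open Real MeasureTheory

/-- Density of the GB2(τ, μ, ν, p) distribution. -/
noncomputable def gb2Pdf (τ μ ν p y : ℝ) : ℝ :=
  |p| / (betaFn ν τ * y) * (μ ^ (p * τ) * y ^ (p * ν) / (y ^ p + μ ^ p) ^ (ν + τ))

lemma betaFn_symm_s6 (m n : ℝ) : betaFn m n = betaFn n m := by
  unfold betaFn
  have h := intervalIntegral.integral_comp_sub_left
    (a := 0) (b := 1) (fun t => t ^ (m - 1) * (1 - t) ^ (n - 1)) 1
  simp only [sub_sub_cancel, sub_zero, sub_self] at h
  rw [← h]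
  congr 1
  ext x
  ring

/-- The GLMGA(σ,a,b) density is the GB2 density with
τ = a, μ = (2b)^{-σ}, ν = 1/2, p = -1/σ. -/
theorem glmga_is_special_case_of_gb2 (σ a b : ℝ) (hσ : 0 < σ) (ha : 0 < a) (hb : 0 < b)
    (y : ℝ) (hy : 0 < y) :
    glmgaPdf σ a b y = gb2Pdf a ((2 * b) ^ (-σ)) (1/2) (-(1 / σ)) y := by
  have h2b : (0:ℝ) < 2 * b := by linarith
  have hσ' : σ ≠ 0 := hσ.ne'
  unfold glmgaPdf gb2Pdf
  rw [betaFn_symm_s6 a (1/2)]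
  rw [← Real.rpow_mul h2b.le, ← Real.rpow_mul h2b.le,
    show -σ * (-(1/σ) * a) = a by field_simp,
    show -σ * -(1/σ) = 1 by field_simp,
    Real.rpow_one,
    show -(1/σ) * (1/2:ℝ) = -(1/(2*σ)) by ring,
    show -(1/(2*σ) + 1) = -(1/(2*σ)) + (-1) by ring,
    Real.rpow_add hy, Real.rpow_neg_one,
    abs_neg, abs_of_pos (by positivity : (0:ℝ) < 1/σ),
    show (1:ℝ)/2 + a = a + 1/2 by ring]
  rcases eq_or_ne (betaFn (1/2) a) 0 with hB | hB
  · rw [hB]; simp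
  · field_simp
end
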